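/- arXiv:2601.16339 — 6 statements merged into one kernel-verified Lean document; each statement's English description precedes it below -/
import Mathlib

section
/- Let R = k[X,Z] be a polynomial ring in two variables over a field k, and let J = (X^2, X*Z^a, Z^c) where a ≥ 1 and c ≥ 2 are integers with a ≤ ⌈c/2⌉. Then the ideal J is integrally closed. -/
/-- `r` is integral over the ideal `I`: it satisfies an equation
`r^m + a_1 r^(m-1) + ... + a_m = 0` with `a_j ∈ I^j`. -/
def IsIntegralOverIdeal {R : Type*} [CommRing R] (I : Ideal R) (r : R) : Prop :=
  ∃ m : ℕ, 0 < m ∧ ∃ a : ℕ → R, (∀ j ∈ Finset.Icc 1 m, a j ∈ I ^ j) ∧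
    r ^ m + ∑ j ∈ Finset.Icc 1 m, a j * r ^ (m - j) = 0

/-- An ideal is integrally closed if it contains every element integral over it. -/
def Ideal.IsIntClosed {R : Type*} [CommRing R] (I : Ideal R) : Prop :=
  ∀ r, IsIntegralOverIdeal I r → r ∈ I

section Aux

open MvPolynomial

variable {k : Type*} [Field k]

/-- The weighted substitution `X i ↦ C (X i) * t ^ (w i)`. -/
noncomputable def wmap (w : Fin 2 → ℕ) :
    MvPolynomial (Fin 2) k →+* Polynomial (MvPolynomial (Fin 2) k) :=
  MvPolynomial.eval₂Hom (Polynomial.C.comp MvPolynomial.C)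
    (fun i => Polynomial.C (MvPolynomial.X i) * Polynomial.X ^ (w i))

/-- The weight of an exponent vector. -/
def wt (w : Fin 2 → ℕ) (e : Fin 2 →₀ ℕ) : ℕ := w 0 * e 0 + w 1 * e 1

lemma wmap_X (w : Fin 2 → ℕ) (i : Fin 2) :
    wmap (k := k) w (X i) = Polynomial.C (MvPolynomial.X i) * Polynomial.X ^ (w i) := by
  simp [wmap]

lemma wmap_monomial (w : Fin 2 → ℕ) (e : Fin 2 →₀ ℕ) (v : k) :
    wmap w (monomial e v)
      = Polynomial.C (monomial e v) * Polynomial.X ^ (wt w e) := by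
  rw [wmap, eval₂Hom_monomial]
  rw [Finsupp.prod_fintype _ _ (fun i => pow_zero _), Fin.prod_univ_two]
  rw [monomial_eq, Finsupp.prod_fintype _ _ (fun i => pow_zero _), Fin.prod_univ_two]
  simp only [RingHom.coe_comp, Function.comp_apply, map_mul, map_pow, wt]
  ring

lemma coeff_coeff_wmap (w : Fin 2 → ℕ) (f : MvPolynomial (Fin 2) k) (μ : Fin 2 →₀ ℕ) :
    MvPolynomial.coeff μ (Polynomial.coeff (wmap w f) (wt w μ)) = MvPolynomial.coeff μ f := by
  induction f using MvPolynomial.induction_on' with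
  | add p q hp hq => simp [map_add, Polynomial.coeff_add, MvPolynomial.coeff_add, hp, hq]
  | monomial e v =>
    rw [wmap_monomial, Polynomial.coeff_C_mul, Polynomial.coeff_X_pow]
    by_cases he : e = μ
    · subst he; simp
    · rw [MvPolynomial.coeff_monomial, if_neg he]
      rw [mul_ite, mul_one, mul_zero]
      rw [apply_ite (MvPolynomial.coeff μ), MvPolynomial.coeff_monomial, if_neg he]
      simp

lemma wmap_coeff_ne (w : Fin 2 → ℕ) {f : MvPolynomial (Fin 2) k} {μ : Fin 2 →₀ ℕ}
    (hμ : μ ∈ f.support) : Polynomial.coeff (wmap w f) (wt w μ) ≠ 0 := by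
  intro h
  have := coeff_coeff_wmap w f μ
  rw [h] at this
  simp only [MvPolynomial.coeff_zero] at this
  exact (MvPolynomial.mem_support_iff.mp hμ) this.symm

lemma wmap_ne_zero (w : Fin 2 → ℕ) {f : MvPolynomial (Fin 2) k} (hf : f ≠ 0) :
    wmap w f ≠ 0 := by
  obtain ⟨μ, hμ⟩ := (MvPolynomial.support_nonempty (p := f)).mpr hf
  intro h
  exact wmap_coeff_ne w hμ (by rw [h]; simp)

lemma ntd_le_wt (w : Fin 2 → ℕ) {f : MvPolynomial (Fin 2) k} {μ : Fin 2 →₀ ℕ}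
    (hμ : μ ∈ f.support) : (wmap w f).natTrailingDegree ≤ wt w μ :=
  Polynomial.natTrailingDegree_le_of_ne_zero (wmap_coeff_ne w hμ)

lemma ntd_pow {R : Type*} [CommRing R] [IsDomain R] {p : Polynomial R} (hp : p ≠ 0) (m : ℕ) :
    (p ^ m).natTrailingDegree = m * p.natTrailingDegree := by
  induction m with
  | zero => simp
  | succ n ih =>
    rw [pow_succ, Polynomial.natTrailingDegree_mul (pow_ne_zero _ hp) hp, ih]
    ring

/-- The valuative lower bound: an element integral over `J` has trailing degree at least `V`
whenever `J` maps into `(X^V)`. -/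
lemma tdeg_ge {S : Type*} [CommRing S] [IsDomain S] (φ : S →+* Polynomial S) (V : ℕ)
    (J : Ideal S) (hJ : Ideal.map φ J ≤ Ideal.span {Polynomial.X ^ V})
    {r : S} (hr : φ r ≠ 0) (hint : IsIntegralOverIdeal J r) :
    V ≤ (φ r).natTrailingDegree := by
  by_contra hlt
  push_neg at hlt
  set p := φ r with hp
  set d := p.natTrailingDegree with hd
  obtain ⟨m, hm, A, hA, heq⟩ := hint
  have heq2 : p ^ m = -∑ j ∈ Finset.Icc 1 m, φ (A j) * p ^ (m - j) := by
    have := congrArg φ heq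
    simp only [map_add, map_pow, map_sum, map_mul, map_zero] at this
    exact eq_neg_of_add_eq_zero_left this
  have hXd : Polynomial.X ^ d ∣ p :=
    Polynomial.X_pow_dvd_iff.mpr fun i hi =>
      Polynomial.coeff_eq_zero_of_lt_natTrailingDegree hi
  have hdvd : Polynomial.X ^ (m * d + 1) ∣ p ^ m := by
    rw [heq2]
    refine dvd_neg.mpr (Finset.dvd_sum fun j hj => ?_)
    obtain ⟨hj1, hj2⟩ := Finset.mem_Icc.mp hj
    have h1 : Polynomial.X ^ (j * V) ∣ φ (A j) := by
      have : φ (A j) ∈ Ideal.map φ (J ^ j) :=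
        Ideal.mem_map_of_mem φ (hA j hj)
      rw [Ideal.map_pow] at this
      have := (Ideal.pow_right_mono hJ j) this
      rw [Ideal.span_singleton_pow, ← pow_mul] at this
      rw [mul_comm]
      exact Ideal.mem_span_singleton.mp this
    have h2 : Polynomial.X ^ ((m - j) * d) ∣ p ^ (m - j) := by
      calc Polynomial.X ^ ((m-j)*d) = (Polynomial.X ^ d)^(m-j) := by rw [← pow_mul, mul_comm]
      _ ∣ p ^ (m - j) := pow_dvd_pow_of_dvd (Polynomial.X_pow_dvd_iff.mpr fun i hi =>
          Polynomial.coeff_eq_zero_of_lt_natTrailingDegree hi) _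
    have h3 : Polynomial.X ^ (j * V + (m - j) * d) ∣ φ (A j) * p ^ (m - j) := by
      rw [pow_add]; exact mul_dvd_mul h1 h2
    refine dvd_trans (pow_dvd_pow _ ?_) h3
    obtain ⟨t, rfl⟩ := Nat.exists_eq_add_of_le hj2
    simp only [Nat.add_sub_cancel_left]
    nlinarith [Nat.mul_le_mul_left j hlt]
  have hc : Polynomial.coeff (p ^ m) (m * d) = 0 :=
    Polynomial.X_pow_dvd_iff.mp hdvd (m * d) (Nat.lt_succ_self _)
  have hne : Polynomial.coeff (p ^ m) (m * d) ≠ 0 := by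
    rw [← ntd_pow hr m]
    exact Polynomial.coeff_natTrailingDegree_ne_zero.mpr (pow_ne_zero _ hr)
  exact hne hc

/-- The ideal `J` maps into `(X^V)` whenever `V` is at most the weight of each generator. -/
lemma map_J_le (a c : ℕ) (w : Fin 2 → ℕ) (V : ℕ) (h1 : V ≤ 2 * w 0)
    (h2 : V ≤ w 0 + a * w 1) (h3 : V ≤ c * w 1) :
    Ideal.map (wmap (k := k) w) (Ideal.span {(X 0 : MvPolynomial (Fin 2) k) ^ 2,
      X 0 * X 1 ^ a, X 1 ^ c}) ≤ Ideal.span {Polynomial.X ^ V} := by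
  rw [Ideal.map_span, Ideal.span_le]
  rintro p ⟨q, hq, rfl⟩
  rw [SetLike.mem_coe, Ideal.mem_span_singleton]
  simp only [Set.mem_insert_iff, Set.mem_singleton_iff] at hq
  rcases hq with rfl | rfl | rfl
  · rw [map_pow, wmap_X, mul_pow, ← pow_mul]
    exact dvd_mul_of_dvd_right (pow_dvd_pow _ (by rw [mul_comm] at h1; exact h1)) _
  · rw [map_mul, map_pow, wmap_X, wmap_X, mul_pow, ← pow_mul]
    refine dvd_trans (pow_dvd_pow Polynomial.X
      (show V ≤ w 0 + w 1 * a by rw [mul_comm (w 1)]; exact h2)) ?_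
    exact ⟨Polynomial.C (X 0) * Polynomial.C (X 1) ^ a, by rw [pow_add]; ring⟩
  · rw [map_pow, wmap_X, mul_pow, ← pow_mul]
    exact dvd_mul_of_dvd_right (pow_dvd_pow _ (by rw [mul_comm] at h3; exact h3)) _

end Aux

open MvPolynomial in
theorem stmt_0 {k : Type*} [Field k] (a c : ℕ) (ha : 1 ≤ a) (hc : 2 ≤ c)
    (hac : a ≤ (c + 1) / 2) :
    Ideal.IsIntClosed (Ideal.span {(X 0 : MvPolynomial (Fin 2) k) ^ 2,
      X 0 * X 1 ^ a, X 1 ^ c}) := by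
  intro r hint
  set J : Ideal (MvPolynomial (Fin 2) k) :=
    Ideal.span {(X 0 : MvPolynomial (Fin 2) k) ^ 2, X 0 * X 1 ^ a, X 1 ^ c} with hJ
  by_cases hr : r = 0
  · rw [hr]; exact J.zero_mem
  -- write r as the sum of its monomials
  rw [← MvPolynomial.support_sum_monomial_coeff r]
  refine Ideal.sum_mem J fun e he => ?_
  -- generators
  have hg1 : (X 0 : MvPolynomial (Fin 2) k) ^ 2 ∈ J := Ideal.subset_span (by simp)
  have hg2 : (X 0 : MvPolynomial (Fin 2) k) * X 1 ^ a ∈ J := Ideal.subset_span (by simp)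
  have hg3 : (X 1 : MvPolynomial (Fin 2) k) ^ c ∈ J := Ideal.subset_span (by simp)
  have hmem : ∀ g ∈ J, ∀ f : MvPolynomial (Fin 2) k, g ∣ f → f ∈ J := by
    rintro g hg f ⟨q, rfl⟩
    exact Ideal.mul_mem_right _ _ hg
  have h2a : 2 * a ≤ c + 1 := by omega
  by_cases hx2 : 2 ≤ e 0
  · refine hmem _ hg1 _ ?_
    rw [X_pow_eq_monomial]
    rw [MvPolynomial.monomial_dvd_monomial]
    refine ⟨Or.inr ?_, one_dvd _⟩
    intro i
    fin_cases i <;> simp [Finsupp.single_apply] <;> omega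
  by_cases hz : c ≤ e 1
  · refine hmem _ hg3 _ ?_
    rw [X_pow_eq_monomial, MvPolynomial.monomial_dvd_monomial]
    refine ⟨Or.inr ?_, one_dvd _⟩
    intro i
    fin_cases i <;> simp [Finsupp.single_apply] <;> omega
  by_cases hx1 : e 0 = 1
  · by_cases hza : a ≤ e 1
    · refine hmem _ hg2 _ ?_
      have hX : (X 0 : MvPolynomial (Fin 2) k) * X 1 ^ a =
          monomial (Finsupp.single 0 1 + Finsupp.single 1 a) 1 := by
        rw [X_pow_eq_monomial, X, monomial_mul, one_mul]
      rw [hX, MvPolynomial.monomial_dvd_monomial]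
      refine ⟨Or.inr ?_, one_dvd _⟩
      intro i
      fin_cases i <;> simp [Finsupp.single_apply] <;> omega
    -- impossible case: x = 1, z < a ; use weight (2z+1, 2)
    · exfalso
      push_neg at hza
      set z := e 1 with hzdef
      set w : Fin 2 → ℕ := ![2 * z + 1, 2] with hw
      have hVle : 4 * z + 2 ≤ (wmap (k := k) w r).natTrailingDegree := by
        refine tdeg_ge _ _ J (map_J_le a c w _ ?_ ?_ ?_) (wmap_ne_zero w hr) hint
        · simp only [hw, Matrix.cons_val_zero, Matrix.cons_val_one, Matrix.head_cons]; omega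
        · simp only [hw, Matrix.cons_val_zero, Matrix.cons_val_one, Matrix.head_cons]; omega
        · simp only [hw, Matrix.cons_val_zero, Matrix.cons_val_one, Matrix.head_cons]; omega
      have hub : (wmap (k := k) w r).natTrailingDegree ≤ wt w e := ntd_le_wt w he
      have : wt w e = 4 * z + 1 := by
        simp only [wt, hw, Matrix.cons_val_zero, Matrix.cons_val_one, Matrix.head_cons,
          hx1, ← hzdef]
        omega
      omega
  -- impossible case: x = 0, z < c ; use weight (z+1, 1)
  · exfalso
    have hx0 : e 0 = 0 := by omega
    push_neg at hz
    set z := e 1 with hzdef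
    set w : Fin 2 → ℕ := ![z + 1, 1] with hw
    have hVle : z + 1 ≤ (wmap (k := k) w r).natTrailingDegree := by
      refine tdeg_ge _ _ J (map_J_le a c w _ ?_ ?_ ?_) (wmap_ne_zero w hr) hint
      · simp only [hw, Matrix.cons_val_zero, Matrix.cons_val_one, Matrix.head_cons]; omega
      · simp only [hw, Matrix.cons_val_zero, Matrix.cons_val_one, Matrix.head_cons]; omega
      · simp only [hw, Matrix.cons_val_zero, Matrix.cons_val_one, Matrix.head_cons]; omega
    have hub : (wmap (k := k) w r).natTrailingDegree ≤ wt w e := ntd_le_wt w he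
    have : wt w e = z := by
      simp only [wt, hw, Matrix.cons_val_zero, Matrix.cons_val_one, Matrix.head_cons,
        hx0, ← hzdef]
      omega
    omega
end

section
/- Let R = k[X,Z] be a polynomial ring over a field k and J = (X^2, X*Z^a, Z^c) with integers a ≥ 1, c ≥ 2, a ≤ ⌈c/2⌉. If the monomial X*Z^β lies in the integral closure of J and 1 ≤ β ≤ a−1, then β ≥ c (hence no such monomial exists, i.e., X*Z^β ∉ integral closure of J for 1 ≤ β ≤ a−1 when a−1 < c). -/
/-!
Weight the monomials `X^i Z^j` by `(2β + 1) i + 2 j`. Since `2β + 2 ≤ 2a ≤ c + 1`, every generator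
of `J` has weight at least `4β + 2`, so every monomial of `J^j` has weight at least `j (4β + 2)`,
while `X Z^β` has weight `4β + 1`. Hence in an integral equation `r^m + ∑ a_j r^(m-j) = 0` with
`r = X Z^β` and `a_j ∈ J^j`, no term `a_j r^(m-j)` contains the monomial `r^m`, which is absurd.
-/

theorem Finsupp.weight_mono {σ : Type*} (w : σ → ℕ) {μ ν : σ →₀ ℕ} (h : μ ≤ ν) :
    weight w μ ≤ weight w ν := by
  obtain ⟨δ, rfl⟩ := le_iff_exists_add.mp h
  rw [map_add]
  exact Nat.le_add_right _ _

namespace MvPolynomial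

open Finsupp

variable {σ R : Type*} [CommRing R]

noncomputable def weightIdeal (w : σ → ℕ) (n : ℕ) : Ideal (MvPolynomial σ R) :=
  Ideal.span ((fun μ => monomial μ (1 : R)) '' {μ | n ≤ weight w μ})

theorem monomial_mem_weightIdeal {w : σ → ℕ} {n : ℕ} {μ : σ →₀ ℕ} (h : n ≤ weight w μ) :
    monomial μ (1 : R) ∈ weightIdeal w n :=
  Ideal.subset_span ⟨μ, h, rfl⟩

theorem le_weight_of_mem_weightIdeal {w : σ → ℕ} {n : ℕ} {p : MvPolynomial σ R}
    (hp : p ∈ weightIdeal w n) {ν : σ →₀ ℕ} (hν : ν ∈ p.support) : n ≤ weight w ν := by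
  obtain ⟨μ, hμ, hle⟩ := mem_ideal_span_monomial_image.mp hp ν hν
  exact hμ.trans (weight_mono w hle)

theorem weightIdeal_mul_le (w : σ → ℕ) (n m : ℕ) :
    weightIdeal (R := R) w n * weightIdeal w m ≤ weightIdeal w (n + m) := by
  rw [weightIdeal, weightIdeal, Ideal.span_mul_span', Ideal.span_le]
  rintro _ ⟨_, ⟨μ, hμ, rfl⟩, _, ⟨ν, hν, rfl⟩, rfl⟩
  change monomial μ 1 * monomial ν 1 ∈ weightIdeal w (n + m)
  rw [monomial_mul, one_mul]
  refine monomial_mem_weightIdeal ?_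
  rw [map_add]
  exact Nat.add_le_add hμ hν

theorem weightIdeal_pow_le (w : σ → ℕ) (n j : ℕ) :
    weightIdeal (R := R) w n ^ j ≤ weightIdeal w (j * n) := by
  induction j with
  | zero =>
    rw [pow_zero, zero_mul, Ideal.one_eq_top, top_le_iff, Ideal.eq_top_iff_one]
    simpa using monomial_mem_weightIdeal (R := R) (w := w) (μ := 0) le_rfl
  | succ j ih =>
    rw [pow_succ, Nat.succ_mul]
    exact (Ideal.mul_mono_left ih).trans (weightIdeal_mul_le w _ _)

theorem not_isIntegralOverIdeal_monomial [Nontrivial R] {I : Ideal (MvPolynomial σ R)}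
    {w : σ → ℕ} {d : σ →₀ ℕ} (hI : I ≤ weightIdeal w (weight w d + 1)) :
    ¬ IsIntegralOverIdeal I (monomial d (1 : R)) := by
  classical
  rintro ⟨m, -, A, hA, heq⟩
  have hterm : ∀ j ∈ Finset.Icc 1 m, coeff (m • d) (A j * monomial d 1 ^ (m - j)) = 0 := by
    intro j hj
    obtain ⟨hj1, hjm⟩ := Finset.mem_Icc.mp hj
    have hsplit : m • d = j • d + (m - j) • d := by rw [← add_smul, Nat.add_sub_cancel' hjm]
    rw [monomial_pow, one_pow, hsplit, coeff_mul_monomial, mul_one, ← notMem_support_iff]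
    intro hmem
    have hAj : A j ∈ weightIdeal w (j * (weight w d + 1)) :=
      weightIdeal_pow_le w _ j (Ideal.pow_right_mono hI j (hA j hj))
    have hle := le_weight_of_mem_weightIdeal hAj hmem
    rw [map_nsmul, smul_eq_mul, Nat.mul_succ] at hle
    omega
  have hcoeff := congrArg (coeff (m • d)) heq
  rw [coeff_add, coeff_sum, Finset.sum_eq_zero hterm, monomial_pow, one_pow, coeff_monomial,
    if_pos rfl, add_zero, coeff_zero] at hcoeff
  exact one_ne_zero hcoeff

theorem X_mul_X_pow_eq_monomial (i j : σ) (e : ℕ) :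
    (X i * X j ^ e : MvPolynomial σ R) = monomial (single i 1 + single j e) 1 := by
  rw [X, X_pow_eq_monomial, monomial_mul, one_mul]

end MvPolynomial

open MvPolynomial in
theorem stmt_1_general {k : Type*} [Field k] (a c β : ℕ) (ha : 1 ≤ a)
    (hac : a ≤ (c + 1) / 2) (hβ2 : β ≤ a - 1)
    (hint : IsIntegralOverIdeal
      (Ideal.span {(X 0 : MvPolynomial (Fin 2) k) ^ 2, X 0 * X 1 ^ a, X 1 ^ c})
      (X 0 * X 1 ^ β)) :
    c ≤ β := by
  exfalso
  let w : Fin 2 → ℕ := ![2 * β + 1, 2]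
  have hw (μ : Fin 2 →₀ ℕ) : Finsupp.weight w μ = μ 0 * (2 * β + 1) + μ 1 * 2 := by
    simp [Finsupp.weight_eq_sum, Fin.sum_univ_two, w]
  rw [X_mul_X_pow_eq_monomial 0 1 β] at hint
  refine not_isIntegralOverIdeal_monomial (w := w) ?_ hint
  rw [Ideal.span_le]
  rintro _ (rfl | rfl | rfl) <;>
    [rw [X_pow_eq_monomial]; rw [X_mul_X_pow_eq_monomial]; rw [X_pow_eq_monomial]] <;>
    refine monomial_mem_weightIdeal ?_ <;>
    simp only [hw, Finsupp.add_apply, Finsupp.single_apply, Fin.isValue,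
      Fin.reduceEq, reduceIte, zero_add, add_zero] <;>
    omega

open MvPolynomial in
theorem stmt_1 {k : Type*} [Field k] (a c β : ℕ) (ha : 1 ≤ a) (hc : 2 ≤ c)
    (hac : a ≤ (c + 1) / 2) (hβ1 : 1 ≤ β) (hβ2 : β ≤ a - 1)
    (hint : IsIntegralOverIdeal
      (Ideal.span {(X 0 : MvPolynomial (Fin 2) k) ^ 2, X 0 * X 1 ^ a, X 1 ^ c})
      (X 0 * X 1 ^ β)) :
    c ≤ β :=
  stmt_1_general a c β ha hac hβ2 hint
end

section
/- Let R = k[X,Y,Z] be a polynomial ring over a field k and let I = (X^2, XY, Y^2, Z^c, X*Z^a, Y*Z^b) where 1 ≤ a ≤ b and c ≥ 2 are integers. If b > ⌈c/2⌉, then the monomial Y*Z^{⌈c/2⌉} lies in the integral closure of I but not in I; in particular I is not integrally closed. -/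
theorem isIntegralOverIdeal_of_pow_mem_pow {R : Type*} [CommRing R] {I : Ideal R} {r : R}
    {n : ℕ} (hn : 0 < n) (h : r ^ n ∈ I ^ n) : IsIntegralOverIdeal I r := by
  refine ⟨n, hn, fun j => if j = n then -r ^ n else 0, fun j _ => ?_, ?_⟩
  · dsimp only
    split_ifs with hj
    · subst hj; exact neg_mem h
    · exact zero_mem _
  · simp only [ite_mul, zero_mul, Finset.sum_ite_eq', Finset.mem_Icc, le_refl, and_true,
      Nat.one_le_iff_ne_zero.mpr hn.ne', if_true, Nat.sub_self, pow_zero, mul_one]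
    exact add_neg_cancel _

namespace MvPolynomial

theorem monomial_one_mem_span_monomial_one_image_iff {σ R : Type*} [CommSemiring R]
    [Nontrivial R] {m : σ →₀ ℕ} {S : Set (σ →₀ ℕ)} :
    monomial m (1 : R) ∈ Ideal.span ((fun s => monomial s (1 : R)) '' S) ↔ ∃ s ∈ S, s ≤ m := by
  classical
  rw [mem_ideal_span_monomial_image, support_monomial, if_neg one_ne_zero]
  simp

open Finsupp in
theorem X_one_mul_X_two_pow_notMem_span {R : Type*} [CommSemiring R] [Nontrivial R]
    {a b c d : ℕ} (hdc : d < c) (hdb : d < b) :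
    (X 1 * X 2 ^ d : MvPolynomial (Fin 3) R) ∉ Ideal.span {X 0 ^ 2, X 0 * X 1, X 1 ^ 2, X 2 ^ c,
      X 0 * X 2 ^ a, X 1 * X 2 ^ b} := by
  have hgens : ({X 0 ^ 2, X 0 * X 1, X 1 ^ 2, X 2 ^ c, X 0 * X 2 ^ a, X 1 * X 2 ^ b} :
      Set (MvPolynomial (Fin 3) R)) = (fun s => monomial s 1) ''
      {single 0 2, single 0 1 + single 1 1, single 1 2, single 2 c, single 0 1 + single 2 a,
        single 1 1 + single 2 b} := by
    simp only [Set.image_insert_eq, Set.image_singleton, X_pow_eq_monomial]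
    simp only [X, monomial_mul, mul_one]
  have hY : (X 1 * X 2 ^ d : MvPolynomial (Fin 3) R) = monomial (single 1 1 + single 2 d) 1 := by
    rw [X_pow_eq_monomial, X, monomial_mul, mul_one]
  rw [hgens, hY, monomial_one_mem_span_monomial_one_image_iff]
  rintro ⟨s, hs, hle⟩
  rcases hs with rfl | rfl | rfl | rfl | rfl | rfl
  all_goals
    have h0 := Finsupp.le_def.mp hle 0
    have h1 := Finsupp.le_def.mp hle 1
    have h2 := Finsupp.le_def.mp hle 2
    simp at h0 h1 h2 <;> omega

end MvPolynomial

open MvPolynomial in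
theorem stmt_2_general {k : Type*} [Field k] (a b c : ℕ)
    (hc : 2 ≤ c) (hb : (c + 1) / 2 < b)
    (I : Ideal (MvPolynomial (Fin 3) k))
    (hI : I = Ideal.span {X 0 ^ 2, X 0 * X 1, X 1 ^ 2, X 2 ^ c,
      X 0 * X 2 ^ a, X 1 * X 2 ^ b}) :
    IsIntegralOverIdeal I (X 1 * X 2 ^ ((c + 1) / 2)) ∧
      X 1 * X 2 ^ ((c + 1) / 2) ∉ I ∧ ¬ I.IsIntClosed := by
  set d := (c + 1) / 2
  have hint : IsIntegralOverIdeal I (X 1 * X 2 ^ d) := by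
    have hsq : (X 1 * X 2 ^ d : MvPolynomial (Fin 3) k) ^ 2 =
        X 1 ^ 2 * X 2 ^ c * X 2 ^ (2 * d - c) := by
      rw [mul_pow, ← pow_mul, mul_assoc, ← pow_add, Nat.add_sub_cancel' (by omega), mul_comm d]
    refine isIntegralOverIdeal_of_pow_mem_pow two_pos ?_
    rw [hsq, sq I]
    refine Ideal.mul_mem_right _ _ (Ideal.mul_mem_mul ?_ ?_) <;>
      exact hI ▸ Ideal.subset_span (by simp)
  have hnm : X 1 * X 2 ^ d ∉ I := hI ▸ X_one_mul_X_two_pow_notMem_span (by omega) hb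
  exact ⟨hint, hnm, fun hclosed => hnm (hclosed _ hint)⟩

open MvPolynomial in
theorem stmt_2 {k : Type*} [Field k] (a b c : ℕ) (ha : 1 ≤ a) (hab : a ≤ b)
    (hc : 2 ≤ c) (hb : (c + 1) / 2 < b)
    (I : Ideal (MvPolynomial (Fin 3) k))
    (hI : I = Ideal.span {X 0 ^ 2, X 0 * X 1, X 1 ^ 2, X 2 ^ c,
      X 0 * X 2 ^ a, X 1 * X 2 ^ b}) :
    IsIntegralOverIdeal I (X 1 * X 2 ^ ((c + 1) / 2)) ∧
      X 1 * X 2 ^ ((c + 1) / 2) ∉ I ∧ ¬ I.IsIntClosed :=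
  stmt_2_general a b c hc hb I hI
end

section
/- Let k be a field, g = 2XY ∈ k[X,Y,Z], and h a quadratic form in k[X,Y,Z] such that g,h is a regular sequence and rank(λg + h) ≤ 2 for all λ ∈ k (k infinite, char ≠ 2). Then h ∈ k[X,Y], i.e., h involves only the variables X and Y. -/
open MvPolynomial in
/-- Twice the symmetric matrix associated to a quadratic form in three variables. -/
noncomputable def quadMat {k : Type*} [CommRing k] (f : MvPolynomial (Fin 3) k) :
    Matrix (Fin 3) (Fin 3) k := fun i j =>
  if i = j then 2 * coeff (Finsupp.single i 2) f
  else coeff (Finsupp.single i 1 + Finsupp.single j 1) f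

open MvPolynomial Pointwise

private lemma fs3_ext {m m' : Fin 3 →₀ ℕ} (h0 : m 0 = m' 0) (h1 : m 1 = m' 1)
    (h2 : m 2 = m' 2) : m = m' := by
  ext i; fin_cases i <;> assumption

private lemma fs3_ne {m m' : Fin 3 →₀ ℕ} (h : ¬ (m 0 = m' 0 ∧ m 1 = m' 1 ∧ m 2 = m' 2)) :
    m ≠ m' := fun hc => h ⟨by rw [hc], by rw [hc], by rw [hc]⟩

private lemma deg3 (m : Fin 3 →₀ ℕ) : m.degree = m 0 + m 1 + m 2 := by
  rw [Finsupp.degree_apply, Finset.sum_subset (Finset.subset_univ _) (by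
    intro i _ hi; exact Finsupp.notMem_support_iff.mp hi), Fin.sum_univ_three]

private lemma classify (m : Fin 3 →₀ ℕ) (hm : m 0 + m 1 + m 2 = 2) :
    m = Finsupp.single 0 2 ∨ m = Finsupp.single 0 1 + Finsupp.single 1 1 ∨
    m = Finsupp.single 0 1 + Finsupp.single 2 1 ∨ m = Finsupp.single 1 2 ∨
    m = Finsupp.single 1 1 + Finsupp.single 2 1 ∨ m = Finsupp.single 2 2 := by
  have hcase : (m 0 = 2 ∧ m 1 = 0 ∧ m 2 = 0) ∨ (m 0 = 1 ∧ m 1 = 1 ∧ m 2 = 0) ∨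
      (m 0 = 1 ∧ m 1 = 0 ∧ m 2 = 1) ∨ (m 0 = 0 ∧ m 1 = 2 ∧ m 2 = 0) ∨
      (m 0 = 0 ∧ m 1 = 1 ∧ m 2 = 1) ∨ (m 0 = 0 ∧ m 1 = 0 ∧ m 2 = 2) := by omega
  rcases hcase with ⟨u,v,w⟩|⟨u,v,w⟩|⟨u,v,w⟩|⟨u,v,w⟩|⟨u,v,w⟩|⟨u,v,w⟩
  · exact Or.inl (fs3_ext (by simp [u, Finsupp.single_apply])
      (by simp [v, Finsupp.single_apply]) (by simp [w, Finsupp.single_apply]))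
  · exact Or.inr (Or.inl (fs3_ext (by simp [u, Finsupp.single_apply])
      (by simp [v, Finsupp.single_apply]) (by simp [w, Finsupp.single_apply])))
  · exact Or.inr (Or.inr (Or.inl (fs3_ext (by simp [u, Finsupp.single_apply])
      (by simp [v, Finsupp.single_apply]) (by simp [w, Finsupp.single_apply]))))
  · exact Or.inr (Or.inr (Or.inr (Or.inl (fs3_ext (by simp [u, Finsupp.single_apply])
      (by simp [v, Finsupp.single_apply]) (by simp [w, Finsupp.single_apply])))))
  · exact Or.inr (Or.inr (Or.inr (Or.inr (Or.inl (fs3_ext (by simp [u, Finsupp.single_apply])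
      (by simp [v, Finsupp.single_apply]) (by simp [w, Finsupp.single_apply]))))))
  · exact Or.inr (Or.inr (Or.inr (Or.inr (Or.inr (fs3_ext (by simp [u, Finsupp.single_apply])
      (by simp [v, Finsupp.single_apply]) (by simp [w, Finsupp.single_apply]))))))

private lemma X_dvd_of_support {k : Type*} [CommRing k] (h : MvPolynomial (Fin 3) k)
    (i : Fin 3) (hle : ∀ m ∈ h.support, Finsupp.single i 1 ≤ m) : X i ∣ h := by
  rw [← support_sum_monomial_coeff h]
  refine Finset.dvd_sum fun m hm => ?_
  have : (X i : MvPolynomial (Fin 3) k) = monomial (Finsupp.single i 1) 1 := rfl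
  rw [this]
  exact monomial_dvd_monomial.mpr ⟨Or.inr (hle m hm), one_dvd _⟩

private lemma not_reg {k : Type*} [Field k] (h2 : (2 : k) ≠ 0)
    (g h : MvPolynomial (Fin 3) k) (i j : Fin 3) (hne : i ≠ j)
    (hgij : g = 2 * X i * X j) (hdvd : X i ∣ h) :
    ¬ RingTheory.Sequence.IsRegular (MvPolynomial (Fin 3) k) [g, h] := by
  intro hreg
  have hw := hreg.toIsWeaklyRegular
  rw [RingTheory.Sequence.isWeaklyRegular_cons_iff] at hw
  obtain ⟨-, hw⟩ := hw
  rw [RingTheory.Sequence.isWeaklyRegular_cons_iff] at hw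
  obtain ⟨hsm, -⟩ := hw
  obtain ⟨l, hl⟩ := hdvd
  have h2' : (C (2⁻¹ : k) : MvPolynomial (Fin 3) k) * 2 = 1 := by
    rw [show (2 : MvPolynomial (Fin 3) k) = C 2 from (map_ofNat C 2).symm, ← C_mul,
      inv_mul_cancel₀ h2, C_1]
  have key : h * X j = g * (C (2⁻¹ : k) * l) := by
    rw [hl, hgij]
    linear_combination (-(X i * X j * l)) * h2'
  -- in the quotient
  have htop : g • (⊤ : Submodule (MvPolynomial (Fin 3) k) (MvPolynomial (Fin 3) k)) =
      Ideal.span {g} := by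
    rw [← Submodule.ideal_span_singleton_smul, Ideal.smul_eq_mul, Ideal.mul_top]
  have hmem : h * X j ∈ g • (⊤ : Submodule (MvPolynomial (Fin 3) k) (MvPolynomial (Fin 3) k)) := by
    rw [htop]
    exact Ideal.mem_span_singleton.mpr ⟨C (2⁻¹ : k) * l, key⟩
  have hz : h • (Submodule.Quotient.mk (X j) :
      QuotSMulTop g (MvPolynomial (Fin 3) k)) = h • (0 : QuotSMulTop g (MvPolynomial (Fin 3) k)) := by
    rw [smul_zero, ← Submodule.Quotient.mk_smul, smul_eq_mul,
      Submodule.Quotient.mk_eq_zero]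
    exact hmem
  have hXj : (Submodule.Quotient.mk (X j) : QuotSMulTop g (MvPolynomial (Fin 3) k)) = 0 := hsm hz
  rw [Submodule.Quotient.mk_eq_zero, htop, Ideal.mem_span_singleton] at hXj
  obtain ⟨w, hw'⟩ := hXj
  have := congrArg (eval fun t : Fin 3 => if t = j then (1 : k) else 0) hw'
  rw [hgij] at this
  simp [hne, eval_mul] at this

open MvPolynomial RingTheory.Sequence in
theorem stmt_11 {k : Type*} [Field k] [Infinite k] (h2 : (2 : k) ≠ 0)
    (g h : MvPolynomial (Fin 3) k)
    (hg : g = 2 * X 0 * X 1) (hh : h.IsHomogeneous 2)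
    (hreg : IsRegular (MvPolynomial (Fin 3) k) [g, h])
    (hrank : ∀ lam : k, (quadMat (lam • g + h)).rank ≤ 2) :
    h ∈ MvPolynomial.supported k ({0, 1} : Set (Fin 3)) := by
  classical
  set a := coeff (Finsupp.single 0 2) h with ha
  set b := coeff (Finsupp.single 0 1 + Finsupp.single 1 1) h with hb
  set c := coeff (Finsupp.single 0 1 + Finsupp.single 2 1) h with hc
  set d := coeff (Finsupp.single 1 2) h with hd
  set e := coeff (Finsupp.single 1 1 + Finsupp.single 2 1) h with he
  set n := coeff (Finsupp.single 2 2) h with hn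
  have hgm : g = monomial (Finsupp.single 0 1 + Finsupp.single 1 1) (2 : k) := by
    rw [hg, mul_assoc, show (X 0 * X 1 : MvPolynomial (Fin 3) k) =
        monomial (Finsupp.single 0 1 + Finsupp.single 1 1) 1 from by
      rw [X, X, monomial_mul, one_mul],
      show (2 : MvPolynomial (Fin 3) k) = C 2 from (map_ofNat C 2).symm, C_mul_monomial, mul_one]
  have hcg : ∀ m : Fin 3 →₀ ℕ, coeff m g =
      if (Finsupp.single 0 1 + Finsupp.single 1 1 : Fin 3 →₀ ℕ) = m then (2:k) else 0 := by
    intro m; rw [hgm, coeff_monomial]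
  -- the nine coefficients of g
  have hg00 : coeff (Finsupp.single (0:Fin 3) 2) g = 0 := by
    rw [hcg]; exact if_neg (fs3_ne (by simp [Finsupp.single_apply]))
  have hg11 : coeff (Finsupp.single (1:Fin 3) 2) g = 0 := by
    rw [hcg]; exact if_neg (fs3_ne (by simp [Finsupp.single_apply]))
  have hg22 : coeff (Finsupp.single (2:Fin 3) 2) g = 0 := by
    rw [hcg]; exact if_neg (fs3_ne (by simp [Finsupp.single_apply]))
  have hg01 : coeff (Finsupp.single (0:Fin 3) 1 + Finsupp.single 1 1) g = 2 := by
    rw [hcg]; exact if_pos rfl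
  have hg10 : coeff (Finsupp.single (1:Fin 3) 1 + Finsupp.single 0 1) g = 2 := by
    rw [add_comm]; exact hg01
  have hg02 : coeff (Finsupp.single (0:Fin 3) 1 + Finsupp.single 2 1) g = 0 := by
    rw [hcg]; exact if_neg (fs3_ne (by simp [Finsupp.single_apply]))
  have hg20 : coeff (Finsupp.single (2:Fin 3) 1 + Finsupp.single 0 1) g = 0 := by
    rw [add_comm, hcg]; exact if_neg (fs3_ne (by simp [Finsupp.single_apply]))
  have hg12 : coeff (Finsupp.single (1:Fin 3) 1 + Finsupp.single 2 1) g = 0 := by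
    rw [hcg]; exact if_neg (fs3_ne (by simp [Finsupp.single_apply]))
  have hg21 : coeff (Finsupp.single (2:Fin 3) 1 + Finsupp.single 1 1) g = 0 := by
    rw [add_comm, hcg]; exact if_neg (fs3_ne (by simp [Finsupp.single_apply]))
  have hM : ∀ lam : k, quadMat (lam • g + h) =
      !![2*a, 2*lam + b, c; 2*lam + b, 2*d, e; c, e, 2*n] := by
    intro lam
    ext i jj
    fin_cases i <;> fin_cases jj <;>
      simp [quadMat, coeff_add, coeff_smul, hg00, hg11, hg22, hg01, hg10, hg02, hg20,
        hg12, hg21, ← ha, ← hb, ← hc, ← hd, ← he, ← hn, smul_eq_mul,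
        add_comm (Finsupp.single (1 : Fin 3) 1) (Finsupp.single (0 : Fin 3) 1),
        add_comm (Finsupp.single (2 : Fin 3) 1) (Finsupp.single (0 : Fin 3) 1),
        add_comm (Finsupp.single (2 : Fin 3) 1) (Finsupp.single (1 : Fin 3) 1)] <;> ring
  have hdet : ∀ lam : k,
      Matrix.det (!![2*a, 2*lam + b, c; 2*lam + b, 2*d, e; c, e, 2*n]) = 0 := by
    intro lam
    rw [← hM lam]
    by_contra hne
    have hu : IsUnit (quadMat (lam • g + h)) :=
      (Matrix.isUnit_iff_isUnit_det _).mpr (isUnit_iff_ne_zero.mpr hne)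
    have hr := Matrix.rank_of_isUnit _ hu
    have hle := hrank lam
    rw [hr] at hle
    simp at hle
  have key : ∀ lam : k, (-8*n)*lam^2 + (4*(c*e) - 8*b*n)*lam +
      (8*a*d*n - 2*a*e^2 - 2*n*b^2 + 2*b*(c*e) - 2*d*c^2) = 0 := by
    intro lam
    have := hdet lam
    simp [Matrix.det_fin_three] at this
    linear_combination this
  have h16 : (16 : k) ≠ 0 := by
    have := pow_ne_zero 4 h2; norm_num at this; exact this
  have h8 : (8 : k) ≠ 0 := by
    have := pow_ne_zero 3 h2; norm_num at this; exact this
  have hn0 : n = 0 := by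
    have h1 := key 1
    have hm1 := key (-1)
    have h0 := key 0
    have h16n : (16:k) * n = 0 := by linear_combination (-1) * h1 + (-1) * hm1 + 2 * h0
    rcases mul_eq_zero.mp h16n with hx | hx
    · exact absurd hx h16
    · exact hx
  have hce : c * e = 0 := by
    have h1 := key 1
    have hm1 := key (-1)
    have h8ce : (8:k) * (c * e) = 0 := by linear_combination h1 - hm1 + (16*b) * hn0
    rcases mul_eq_zero.mp h8ce with hx | hx
    · exact absurd hx h8
    · exact hx
  have hC : a * e^2 + d * c^2 = 0 := by
    have h0 := key 0
    have h2C : (2:k) * (a * e^2 + d * c^2) = 0 := by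
      linear_combination (-1) * h0 + (8*a*d - 2*b^2) * hn0 + 2*b*hce
    rcases mul_eq_zero.mp h2C with hx | hx
    · exact absurd hx h2
    · exact hx
  -- final reduction
  have main : c = 0 ∧ e = 0 := by
    rcases mul_eq_zero.mp hce with hc0 | he0
    · -- c = 0
      have hae : a * e ^ 2 = 0 := by linear_combination hC + (-(d*c)) * hc0
      rcases mul_eq_zero.mp hae with ha0 | he20
      · exfalso
        refine not_reg h2 g h 1 0 (by decide) (by rw [hg]; ring) ?_ hreg
        refine X_dvd_of_support h 1 fun m hm => ?_
        have hmne : coeff m h ≠ 0 := mem_support_iff.mp hm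
        have hdeg : m.degree = 2 := by
          by_contra hx; exact hmne (hh.coeff_eq_zero hx)
        rw [deg3] at hdeg
        rcases classify m hdeg with rfl | rfl | rfl | rfl | rfl | rfl
        · exact absurd (by rw [← ha]; exact ha0) hmne
        · rw [Finsupp.le_def]; intro s; fin_cases s <;> simp [Finsupp.single_apply]
        · exact absurd (by rw [← hc]; exact hc0) hmne
        · rw [Finsupp.le_def]; intro s; fin_cases s <;> simp [Finsupp.single_apply]
        · rw [Finsupp.le_def]; intro s; fin_cases s <;> simp [Finsupp.single_apply]
        · exact absurd (by rw [← hn]; exact hn0) hmne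
      · exact ⟨hc0, (pow_eq_zero_iff two_ne_zero).mp he20⟩
    · -- e = 0
      have hdc : d * c ^ 2 = 0 := by linear_combination hC + (-(a*e)) * he0
      rcases mul_eq_zero.mp hdc with hd0 | hc20
      · exfalso
        refine not_reg h2 g h 0 1 (by decide) hg ?_ hreg
        refine X_dvd_of_support h 0 fun m hm => ?_
        have hmne : coeff m h ≠ 0 := mem_support_iff.mp hm
        have hdeg : m.degree = 2 := by
          by_contra hx; exact hmne (hh.coeff_eq_zero hx)
        rw [deg3] at hdeg
        rcases classify m hdeg with rfl | rfl | rfl | rfl | rfl | rfl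
        · rw [Finsupp.le_def]; intro s; fin_cases s <;> simp [Finsupp.single_apply]
        · rw [Finsupp.le_def]; intro s; fin_cases s <;> simp [Finsupp.single_apply]
        · rw [Finsupp.le_def]; intro s; fin_cases s <;> simp [Finsupp.single_apply]
        · exact absurd (by rw [← hd]; exact hd0) hmne
        · exact absurd (by rw [← he]; exact he0) hmne
        · exact absurd (by rw [← hn]; exact hn0) hmne
      · exact ⟨(pow_eq_zero_iff two_ne_zero).mp hc20, he0⟩
  obtain ⟨hc0, he0⟩ := main
  -- conclude: vars ⊆ {0,1}
  rw [mem_supported]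
  intro i hi
  fin_cases i
  · simp
  · simp
  · exfalso
    rw [Finset.mem_coe, mem_vars] at hi
    obtain ⟨m, hm, h2m⟩ := hi
    have hmne : coeff m h ≠ 0 := mem_support_iff.mp hm
    have hdeg : m.degree = 2 := by
      by_contra hx; exact hmne (hh.coeff_eq_zero hx)
    rw [deg3] at hdeg
    have hm2 : m 2 ≠ 0 := Finsupp.mem_support_iff.mp h2m
    rcases classify m hdeg with rfl | rfl | rfl | rfl | rfl | rfl
    · simp [Finsupp.single_apply] at hm2
    · simp [Finsupp.single_apply] at hm2
    · exact hmne (by rw [← hc]; exact hc0)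
    · simp [Finsupp.single_apply] at hm2
    · exact hmne (by rw [← he]; exact he0)
    · exact hmne (by rw [← hn]; exact hn0)
end

section
/- Let k be a field and g, h ∈ k[X,Y] a regular sequence of quadratic forms. Then the ideal (X,Y)^2·k[X,Y] is the integral closure of (g,h)·k[X,Y]; in particular (X,Y)^2 ⊆ integral closure of (g,h). -/
open MvPolynomial Finset Pointwise

section Aux
variable {k : Type*} [Field k]

local notation "R2" => MvPolynomial (Fin 2) k

lemma fin2_degree (d : Fin 2 →₀ ℕ) : d.degree = d 0 + d 1 := by
  classical
  rw [Finsupp.degree_apply, Finset.sum_subset (Finset.subset_univ d.support)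
    (fun i _ hi => Finsupp.notMem_support_iff.mp hi), Fin.sum_univ_two]

lemma fin2_ext (d : Fin 2 →₀ ℕ) :
    d = Finsupp.single 0 (d 0) + Finsupp.single 1 (d 1) := by
  ext i
  fin_cases i <;> simp [Finsupp.single_apply]

/-- The ideal of polynomials all of whose monomials have degree `≥ n`. -/
def Kdl (k : Type*) [Field k] (n : ℕ) : Ideal (MvPolynomial (Fin 2) k) where
  carrier := {p | ∀ d : Fin 2 →₀ ℕ, d.degree < n → coeff d p = 0}
  add_mem' := by
    intro a b ha hb d hd
    simp [coeff_add, ha d hd, hb d hd]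
  zero_mem' := by intro d hd; simp
  smul_mem' := by
    intro c p hp d hd
    rw [smul_eq_mul, coeff_mul]
    apply Finset.sum_eq_zero
    intro u hu
    rw [Finset.HasAntidiagonal.mem_antidiagonal] at hu
    have h2 : u.2.degree < n := by
      have : u.1.degree + u.2.degree = d.degree := by
        rw [← hu]; simp [fin2_degree]; ring
      omega
    rw [hp u.2 h2, mul_zero]

lemma mem_Kdl {n : ℕ} {p : R2} :
    p ∈ Kdl k n ↔ ∀ d : Fin 2 →₀ ℕ, d.degree < n → coeff d p = 0 := Iff.rfl

lemma Kdl_antitone {a b : ℕ} (hab : a ≤ b) : Kdl k b ≤ Kdl k a :=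
  fun _ hp d hd => hp d (lt_of_lt_of_le hd hab)

lemma mul_mem_Kdl {a b : ℕ} {p q : R2} (hp : p ∈ Kdl k a) (hq : q ∈ Kdl k b) :
    p * q ∈ Kdl k (a + b) := by
  intro d hd
  rw [coeff_mul]
  apply Finset.sum_eq_zero
  intro u hu
  rw [Finset.HasAntidiagonal.mem_antidiagonal] at hu
  have hsum : u.1.degree + u.2.degree = d.degree := by
    rw [← hu]; simp [fin2_degree]; ring
  rcases lt_or_ge u.1.degree a with h1 | h1
  · rw [hp u.1 h1, zero_mul]
  · rw [hq u.2 (by omega), mul_zero]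

lemma pow_mem_Kdl {a : ℕ} {p : R2} (hp : p ∈ Kdl k a) (t : ℕ) :
    p ^ t ∈ Kdl k (a * t) := by
  induction t with
  | zero => intro d hd; omega
  | succ t ih =>
      have := mul_mem_Kdl ih hp
      rw [← pow_succ] at this
      rw [Nat.mul_succ]
      exact this

lemma isHomogeneous_mem_Kdl {p : R2} {n : ℕ} (hp : p.IsHomogeneous n) :
    p ∈ Kdl k n := fun d hd => hp.coeff_eq_zero (by omega)

lemma monomial_mem_pow (d : Fin 2 →₀ ℕ) (c : k) :
    (monomial d c : R2) ∈ (Ideal.span {X 0, X 1} : Ideal R2) ^ d.degree := by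
  induction d using Finsupp.induction with
  | zero => simp
  | single_add i a e hie ha ih =>
      have hXi : (X i : R2) ∈ Ideal.span {X 0, X 1} := by
        apply Ideal.subset_span
        fin_cases i <;> simp
      have h1 : (monomial (Finsupp.single i a + e) c : R2)
          = X i ^ a * monomial e c := by
        rw [X_pow_eq_monomial, monomial_mul, one_mul]
      have hdeg : (Finsupp.single i a + e).degree = a + e.degree := by
        simp only [fin2_degree, Finsupp.add_apply, Finsupp.single_apply]
        fin_cases i <;> simp <;> ring
      rw [h1, hdeg, pow_add]
      exact Ideal.mul_mem_mul (Ideal.pow_mem_pow hXi a) ih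

lemma span_pow_eq_Kdl (n : ℕ) :
    (Ideal.span {X 0, X 1} : Ideal R2) ^ n = Kdl k n := by
  apply le_antisymm
  · induction n with
    | zero => intro p _ d hd; omega
    | succ n ih =>
        rw [pow_succ]
        refine le_trans (Ideal.mul_le.mpr fun r hr s hs => ?_) le_rfl
        have hr' : r ∈ Kdl k n := ih hr
        have hs' : s ∈ Kdl k 1 := by
          have hX : ∀ i : Fin 2, (X i : R2) ∈ Kdl k 1 := by
            intro i d hd
            have : d = 0 := by
              rw [← Finsupp.degree_eq_zero_iff]; omega
            subst this
            simp [coeff_zero_X]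
          have : Ideal.span {(X 0 : R2), X 1} ≤ Kdl k 1 := by
            rw [Ideal.span_le]
            rintro x (rfl | rfl)
            · exact hX 0
            · exact hX 1
          exact this hs
        exact mul_mem_Kdl hr' hs'
  · intro p hp
    rw [p.as_sum]
    refine Ideal.sum_mem _ fun d hd => ?_
    have hdeg : n ≤ d.degree := by
      by_contra hlt
      exact (mem_support_iff.mp hd) (hp d (by omega))
    exact Ideal.pow_le_pow_right hdeg (monomial_mem_pow d _)

/-- exponent of the cubic monomial `x^i y^(3-i)` -/
noncomputable def expo (i : ℕ) : Fin 2 →₀ ℕ := Finsupp.single 0 i + Finsupp.single 1 (3 - i)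

lemma expo_apply_zero (i : ℕ) : expo i 0 = i := by simp [expo]

lemma expo_apply_one (i : ℕ) : expo i 1 = 3 - i := by simp [expo]

lemma expo_degree {i : ℕ} (hi : i ≤ 3) : (expo i).degree = 3 := by
  rw [fin2_degree, expo_apply_zero, expo_apply_one]; omega

lemma eq_expo_of_degree3 {d : Fin 2 →₀ ℕ} (hd : d.degree = 3) :
    d = expo (d 0) ∧ d 0 ≤ 3 := by
  rw [fin2_degree] at hd
  refine ⟨?_, by omega⟩
  conv_lhs => rw [fin2_ext d]
  unfold expo
  congr 2
  omega

variable (g h : MvPolynomial (Fin 2) k)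

/-- the polynomial `(w0 x + w1 y) g + (w2 x + w3 y) h` -/
noncomputable def Pw (w : Fin 4 → k) : R2 :=
  (w 0 • X 0 + w 1 • X 1) * g + (w 2 • X 0 + w 3 • X 1) * h

lemma Pw_isHomogeneous (hg : g.IsHomogeneous 2) (hh : h.IsHomogeneous 2)
    (w : Fin 4 → k) : (Pw g h w).IsHomogeneous 3 := by
  have hlin : ∀ (a b : k), ((a • X 0 + b • X 1 : R2)).IsHomogeneous 1 := by
    intro a b
    rw [smul_eq_C_mul, smul_eq_C_mul]
    exact (((isHomogeneous_C _ a).mul (isHomogeneous_X _ _)) :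
        (MvPolynomial.IsHomogeneous _ (0+1))).add
      (((isHomogeneous_C _ b).mul (isHomogeneous_X _ _)) :
        (MvPolynomial.IsHomogeneous _ (0+1)))
  exact (((hlin (w 0) (w 1)).mul hg) : MvPolynomial.IsHomogeneous _ (1+2)).add
    (((hlin (w 2) (w 3)).mul hh) : MvPolynomial.IsHomogeneous _ (1+2))

/-- coefficients of `Pw` on the cubic monomials, as a linear endomorphism of `k^4` -/
noncomputable def Tmap : (Fin 4 → k) →ₗ[k] (Fin 4 → k) where
  toFun w i := coeff (expo i) (Pw g h w)
  map_add' w w' := by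
    funext i
    simp only [Pi.add_apply, Pw, add_smul]
    rw [← coeff_add]
    congr 1
    ring
  map_smul' c w := by
    funext i
    have hP : Pw g h (c • w) = c • Pw g h w := by
      simp only [Pw, Pi.smul_apply, smul_eq_mul, smul_eq_C_mul, map_mul]
      ring
    show coeff (expo (i : ℕ)) (Pw g h (c • w)) = _
    rw [hP, coeff_smul]
    simp

lemma mem_smul_top_iff (g x : R2) :
    x ∈ g • (⊤ : Submodule (MvPolynomial (Fin 2) k) (MvPolynomial (Fin 2) k)) ↔
      ∃ c, x = g * c := by
  rw [← Submodule.ideal_span_singleton_smul, Ideal.smul_eq_mul, Ideal.mul_top,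
    Ideal.mem_span_singleton']
  constructor
  · rintro ⟨c, rfl⟩; exact ⟨c, (mul_comm _ _)⟩
  · rintro ⟨c, rfl⟩; exact ⟨c, (mul_comm _ _)⟩

lemma coeff_lin₀ (u v : k) :
    coeff (Finsupp.single 0 1) (u • X 0 + v • X 1 : R2) = u := by
  simp [coeff_X', Finsupp.single_eq_single_iff]

lemma coeff_lin₁ (u v : k) :
    coeff (Finsupp.single 1 1) (u • X 0 + v • X 1 : R2) = v := by
  simp [coeff_X', Finsupp.single_eq_single_iff]

lemma Tmap_injective (hg : g.IsHomogeneous 2) (hh : h.IsHomogeneous 2)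
    (hg1 : IsSMulRegular (MvPolynomial (Fin 2) k) g)
    (hg2 : IsSMulRegular (QuotSMulTop g (MvPolynomial (Fin 2) k)) h) :
    Function.Injective (Tmap g h) := by
  rw [← LinearMap.ker_eq_bot]
  rw [LinearMap.ker_eq_bot']
  intro w hw
  have hgne : g ≠ 0 := by
    rintro rfl
    exact one_ne_zero (hg1 (show (0 : R2) • (1 : R2) = (0 : R2) • (0 : R2) by simp))
  set a : R2 := w 0 • X 0 + w 1 • X 1 with ha
  set b : R2 := w 2 • X 0 + w 3 • X 1 with hb
  have hP0 : Pw g h w = 0 := by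
    apply MvPolynomial.ext
    intro d
    rw [coeff_zero]
    by_cases hd3 : d.degree = 3
    · obtain ⟨hde, hdle⟩ := eq_expo_of_degree3 hd3
      rw [hde]
      exact congrFun hw ⟨d 0, by omega⟩
    · exact (Pw_isHomogeneous g h hg hh w).coeff_eq_zero hd3
  have hPab : a * g + b * h = 0 := hP0
  have hbg : ∃ c, b = g * c := by
    have hmk : (Submodule.Quotient.mk b : QuotSMulTop g (MvPolynomial (Fin 2) k)) = 0 := by
      apply hg2
      show h • (Submodule.Quotient.mk b : QuotSMulTop g (MvPolynomial (Fin 2) k)) = h • 0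
      rw [smul_zero, ← Submodule.Quotient.mk_smul, Submodule.Quotient.mk_eq_zero,
        smul_eq_mul, mem_smul_top_iff]
      exact ⟨-a, by linear_combination hPab⟩
    rw [Submodule.Quotient.mk_eq_zero, mem_smul_top_iff] at hmk
    exact hmk
  obtain ⟨c, hc⟩ := hbg
  have hbK : b ∈ Kdl k 2 := by
    rw [hc]
    exact Ideal.mul_mem_right c _ (isHomogeneous_mem_Kdl hg)
  have hs0 : (Finsupp.single (0 : Fin 2) 1).degree < 2 := by
    rw [fin2_degree]; simp [Finsupp.single_apply]
  have hs1 : (Finsupp.single (1 : Fin 2) 1).degree < 2 := by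
    rw [fin2_degree]; simp [Finsupp.single_apply]
  have hw2 : w 2 = 0 := by
    have := hbK (Finsupp.single 0 1) hs0
    rwa [hb, coeff_lin₀] at this
  have hw3 : w 3 = 0 := by
    have := hbK (Finsupp.single 1 1) hs1
    rwa [hb, coeff_lin₁] at this
  have hb0 : b = 0 := by rw [hb, hw2, hw3]; simp
  have hag : a * g = 0 := by rw [hb0] at hPab; simpa using hPab
  have ha0 : a = 0 := by
    rcases mul_eq_zero.mp hag with h' | h'
    · exact h'
    · exact absurd h' hgne
  have hw0 : w 0 = 0 := by
    have : coeff (Finsupp.single 0 1) a = 0 := by rw [ha0, coeff_zero]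
    rwa [ha, coeff_lin₀] at this
  have hw1 : w 1 = 0 := by
    have : coeff (Finsupp.single 1 1) a = 0 := by rw [ha0, coeff_zero]
    rwa [ha, coeff_lin₁] at this
  funext i
  fin_cases i <;> simpa using (by assumption)

lemma cubic_mem (hg : g.IsHomogeneous 2) (hh : h.IsHomogeneous 2)
    (hg1 : IsSMulRegular (MvPolynomial (Fin 2) k) g)
    (hg2 : IsSMulRegular (QuotSMulTop g (MvPolynomial (Fin 2) k)) h)
    (d : Fin 2 →₀ ℕ) (hd : d.degree = 3) :
    ∃ a b : R2, a ∈ Kdl k 1 ∧ b ∈ Kdl k 1 ∧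
      (monomial d 1 : R2) = a * g + b * h := by
  obtain ⟨hde, hdle⟩ := eq_expo_of_degree3 hd
  have hsurj : Function.Surjective (Tmap g h) :=
    LinearMap.injective_iff_surjective.mp (Tmap_injective g h hg hh hg1 hg2)
  obtain ⟨w, hw⟩ := hsurj (Pi.single (⟨d 0, by omega⟩ : Fin 4) 1)
  have hlinK : ∀ (u v : k), (u • X 0 + v • X 1 : R2) ∈ Kdl k 1 := by
    intro u v
    apply isHomogeneous_mem_Kdl
    rw [smul_eq_C_mul, smul_eq_C_mul]
    exact (((isHomogeneous_C _ u).mul (isHomogeneous_X _ _)) :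
        (MvPolynomial.IsHomogeneous _ (0+1))).add
      (((isHomogeneous_C _ v).mul (isHomogeneous_X _ _)) :
        (MvPolynomial.IsHomogeneous _ (0+1)))
  refine ⟨w 0 • X 0 + w 1 • X 1, w 2 • X 0 + w 3 • X 1, hlinK _ _, hlinK _ _, ?_⟩
  show (monomial d 1 : R2) = Pw g h w
  apply MvPolynomial.ext
  intro e
  by_cases he3 : e.degree = 3
  · obtain ⟨hee, hele⟩ := eq_expo_of_degree3 he3
    have hco : coeff e (Pw g h w) = (Pi.single (⟨d 0, by omega⟩ : Fin 4) (1 : k) : Fin 4 → k) ⟨e 0, by omega⟩ := by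
      conv_lhs => rw [hee]
      exact (congrFun hw ⟨e 0, by omega⟩).symm ▸ rfl
    rw [hco, coeff_monomial, Pi.single_apply]
    by_cases hde0 : e 0 = d 0
    · rw [if_pos (by rw [hde, hee, hde0]), if_pos (by exact Fin.mk_eq_mk.mpr hde0)]
    · rw [if_neg (fun hcon => hde0 (by rw [hcon, hee, expo_apply_zero])),
        if_neg (fun hcon => hde0 (congrArg Fin.val hcon))]
  · rw [(Pw_isHomogeneous g h hg hh w).coeff_eq_zero he3, coeff_monomial,
      if_neg (fun hcon : d = e => he3 (hcon ▸ hd))]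

lemma Kdl4_le (hg : g.IsHomogeneous 2) (hh : h.IsHomogeneous 2)
    (hg1 : IsSMulRegular (MvPolynomial (Fin 2) k) g)
    (hg2 : IsSMulRegular (QuotSMulTop g (MvPolynomial (Fin 2) k)) h) :
    Kdl k 4 ≤ Ideal.span {g, h} * Kdl k 2 := by
  intro p hp
  rw [p.as_sum]
  refine Ideal.sum_mem _ fun d hd => ?_
  have hdeg : 4 ≤ d.degree := by
    by_contra hlt
    exact (mem_support_iff.mp hd) (hp d (by omega))
  rw [fin2_degree] at hdeg
  -- choose a cubic sub-exponent c ≤ d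
  set i : ℕ := min (d 0) 3 with hi
  set c : Fin 2 →₀ ℕ := expo i with hc
  have hc0 : c 0 = i := expo_apply_zero i
  have hc1 : c 1 = 3 - i := expo_apply_one i
  have hile : i ≤ 3 := min_le_right _ _
  have hcd0 : c 0 ≤ d 0 := by rw [hc0]; omega
  have hcd1 : c 1 ≤ d 1 := by rw [hc1]; omega
  have hcdeg : c.degree = 3 := expo_degree hile
  have hsplit : d = (d - c) + c := by
    ext j
    fin_cases j <;> simp [Finsupp.tsub_apply] <;> omega
  obtain ⟨a, b, haK, hbK, hab⟩ := cubic_mem g h hg hh hg1 hg2 c hcdeg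
  have hmono : (monomial d (coeff d p) : R2)
      = monomial (d - c) (coeff d p) * monomial c 1 := by
    rw [monomial_mul, mul_one, ← hsplit]
  have hdcK : (monomial (d - c) (coeff d p) : R2) ∈ Kdl k 1 := by
    intro e he
    rw [coeff_monomial]
    split
    · exfalso
      subst_vars
      rw [fin2_degree, Finsupp.tsub_apply, Finsupp.tsub_apply] at he
      omega
    · rfl
  rw [hmono, hab, mul_add, ← mul_assoc, ← mul_assoc]
  have hgmem : g ∈ Ideal.span {g, h} := Ideal.subset_span (by simp)
  have hhmem : h ∈ Ideal.span {g, h} := Ideal.subset_span (by simp)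
  have haK2 : monomial (d - c) (coeff d p) * a ∈ Kdl k 2 := by
    have := mul_mem_Kdl hdcK haK
    norm_num at this
    exact this
  have hbK2 : monomial (d - c) (coeff d p) * b ∈ Kdl k 2 := by
    have := mul_mem_Kdl hdcK hbK
    norm_num at this
    exact this
  refine Ideal.add_mem _ ?_ ?_
  · rw [mul_comm _ g]
    exact Ideal.mul_mem_mul hgmem haK2
  · rw [mul_comm _ h]
    exact Ideal.mul_mem_mul hhmem hbK2

lemma exists_integral (hg : g.IsHomogeneous 2) (hh : h.IsHomogeneous 2)
    (hg1 : IsSMulRegular (MvPolynomial (Fin 2) k) g)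
    (hg2 : IsSMulRegular (QuotSMulTop g (MvPolynomial (Fin 2) k)) h)
    {r : R2} (hr : r ∈ (Ideal.span {X 0, X 1} : Ideal R2) ^ 2) :
    IsIntegralOverIdeal (Ideal.span {g, h}) r := by
  classical
  set I : Ideal R2 := Ideal.span {g, h} with hI
  set M : Ideal R2 := (Ideal.span {X 0, X 1} : Ideal R2) ^ 2 with hM
  haveI : Module.Finite (MvPolynomial (Fin 2) k) ↥M := by
    rw [Module.Finite.iff_fg, hM, pow_two, Ideal.span_mul_span]
    apply Submodule.fg_span
    exact ((Set.finite_singleton _).insert _).mul ((Set.finite_singleton _).insert _)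
  set f : Module.End (MvPolynomial (Fin 2) k) ↥M :=
    algebraMap (MvPolynomial (Fin 2) k) (Module.End (MvPolynomial (Fin 2) k) ↥M) r with hf
  have hrange : LinearMap.range f ≤ I • (⊤ : Submodule (MvPolynomial (Fin 2) k) ↥M) := by
    rintro x ⟨v, rfl⟩
    have hval : ((f v : ↥M) : R2) = r * (v : R2) := by
      rw [hf, Module.algebraMap_end_apply]
      rfl
    have hmem : r * (v : R2) ∈ I • (M : Submodule (MvPolynomial (Fin 2) k) (MvPolynomial (Fin 2) k)) := by
      rw [Ideal.smul_eq_mul]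
      have hr2 : r ∈ Kdl k 2 := by rw [← span_pow_eq_Kdl]; exact hr
      have hv2 : (v : R2) ∈ Kdl k 2 := by rw [← span_pow_eq_Kdl]; exact v.2
      have h4 : r * (v : R2) ∈ Kdl k 4 := by
        have := mul_mem_Kdl hr2 hv2
        norm_num at this
        exact this
      have hIK := Kdl4_le g h hg hh hg1 hg2 h4
      have hIM : I * M = Ideal.span {g, h} * Kdl k 2 := by
        rw [hI, hM, span_pow_eq_Kdl]
      rw [hIM]
      exact hIK
    have hmapped : ((f v : ↥M) : R2) ∈
        Submodule.map M.subtype (I • (⊤ : Submodule (MvPolynomial (Fin 2) k) ↥M)) := by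
      rw [Submodule.map_smul'', Submodule.map_subtype_top, hval]
      exact hmem
    obtain ⟨y, hy, hyx⟩ := hmapped
    exact (Subtype.ext hyx : y = f v) ▸ hy
  obtain ⟨p, hmon, -, hcoeff, haev⟩ :=
    LinearMap.exists_monic_and_coeff_mem_pow_and_aeval_eq_zero_of_range_le_smul
      (MvPolynomial (Fin 2) k) f I hrange
  have hx2 : ((X 0 : R2) ^ 2) ∈ M := by
    rw [hM]
    exact Ideal.pow_mem_pow (Ideal.subset_span (by simp)) 2
  have haev' : Polynomial.aeval f p
      = algebraMap (MvPolynomial (Fin 2) k) (Module.End (MvPolynomial (Fin 2) k) ↥M)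
        (Polynomial.eval r p) := by
    rw [hf]
    exact Polynomial.aeval_algebraMap_apply_eq_algebraMap_eval r p
  have hz : Polynomial.eval r p * (X 0 : R2) ^ 2 = 0 := by
    have h0 := haev'.symm.trans haev
    have h1 := congrArg (fun (φ : Module.End (MvPolynomial (Fin 2) k) ↥M) =>
      ((φ ⟨(X 0 : R2) ^ 2, hx2⟩ : ↥M) : R2)) h0
    simpa [Module.algebraMap_end_apply] using h1
  have hpr : Polynomial.eval r p = 0 := by
    rcases mul_eq_zero.mp hz with h' | h'
    · exact h'
    · exact absurd h' (pow_ne_zero 2 (MvPolynomial.X_ne_zero 0))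
  set n := p.natDegree with hn
  have hn1 : 1 ≤ n := by
    by_contra hcon
    have hn0 : n = 0 := by omega
    have : p = 1 := hmon.natDegree_eq_zero.mp hn0
    rw [this] at hpr
    simp at hpr
  refine ⟨n, hn1, fun j => p.coeff (n - j), ?_, ?_⟩
  · intro j hj
    rw [Finset.mem_Icc] at hj
    have := hcoeff (n - j)
    rwa [Nat.sub_sub_self hj.2] at this
  · have heval : Polynomial.eval r p
        = ∑ i ∈ Finset.range (n + 1), p.coeff i * r ^ i :=
      Polynomial.eval_eq_sum_range (p := p) r
    rw [Finset.sum_range_succ, hmon.coeff_natDegree, one_mul] at heval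
    have hbij : ∑ j ∈ Finset.Icc 1 n, p.coeff (n - j) * r ^ (n - j)
        = ∑ i ∈ Finset.range n, p.coeff i * r ^ i := by
      apply Finset.sum_nbij' (fun j => n - j) (fun i => n - i)
      · intro a ha; rw [Finset.mem_Icc] at ha; rw [Finset.mem_range]; omega
      · intro a ha; rw [Finset.mem_range] at ha; rw [Finset.mem_Icc]; omega
      · intro a ha; rw [Finset.mem_Icc] at ha; omega
      · intro a ha; rw [Finset.mem_range] at ha; omega
      · intro a ha; rfl
    rw [hbij, add_comm, ← heval]
    exact hpr

lemma Kdl_pow_le (c j : ℕ) : (Kdl k c) ^ j ≤ Kdl k (c * j) := by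
  induction j with
  | zero => intro p hp d hd; omega
  | succ j ih =>
      rw [pow_succ, Nat.mul_succ]
      exact Ideal.mul_le.mpr fun r hr s hs => mul_mem_Kdl (ih hr) hs

lemma mem_sq_of_integral (hg : g.IsHomogeneous 2) (hh : h.IsHomogeneous 2)
    {r : R2} (hint : IsIntegralOverIdeal (Ideal.span {g, h}) r) :
    r ∈ (Ideal.span {X 0, X 1} : Ideal R2) ^ 2 := by
  classical
  rw [span_pow_eq_Kdl]
  by_contra hr2
  obtain ⟨m, hm, a, haI, heq⟩ := hint
  have haK : ∀ j ∈ Finset.Icc 1 m, a j ∈ Kdl k (2 * j) := by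
    intro j hj
    have h1 : Ideal.span {g, h} ≤ Kdl k 2 := by
      rw [Ideal.span_le]
      rintro x (rfl | rfl)
      exacts [isHomogeneous_mem_Kdl hg, isHomogeneous_mem_Kdl hh]
    exact Kdl_pow_le 2 j (Ideal.pow_right_mono h1 j (haI j hj))
  obtain ⟨d0, hd0deg, hd0⟩ : ∃ d : Fin 2 →₀ ℕ, d.degree < 2 ∧ coeff d r ≠ 0 := by
    by_contra hcon
    push_neg at hcon
    exact hr2 (fun d hd => hcon d hd)
  have hPdeg : homogeneousComponent d0.degree r ≠ 0 := by
    intro h0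
    apply hd0
    have hcc := coeff_homogeneousComponent (n := d0.degree) (φ := r) d0
    rw [h0, coeff_zero, if_pos rfl] at hcc
    exact hcc.symm
  have hex : ∃ n, homogeneousComponent n r ≠ 0 := ⟨d0.degree, hPdeg⟩
  set dmin := Nat.find hex with hdmin
  have hLne : homogeneousComponent dmin r ≠ 0 := Nat.find_spec hex
  have hd1 : dmin ≤ 1 := le_trans (Nat.find_min' hex hPdeg) (by omega)
  set L := homogeneousComponent dmin r with hL
  have hLhom : L.IsHomogeneous dmin := homogeneousComponent_isHomogeneous dmin r
  have hrK : r ∈ Kdl k dmin := by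
    intro e he
    have hcomp : homogeneousComponent e.degree r = 0 :=
      not_not.mp (Nat.find_min hex (by omega))
    have hcc := coeff_homogeneousComponent (n := e.degree) (φ := r) e
    rw [hcomp, coeff_zero, if_pos rfl] at hcc
    exact hcc.symm
  have hrLK : r - L ∈ Kdl k (dmin + 1) := by
    intro e he
    rcases Nat.lt_or_ge e.degree dmin with hlt | hge
    · rw [coeff_sub, hrK e hlt, hLhom.coeff_eq_zero (by omega), sub_zero]
    · have hed : e.degree = dmin := by omega
      have hcc := coeff_homogeneousComponent (n := dmin) (φ := r) e
      rw [if_pos hed] at hcc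
      rw [coeff_sub, hL, hcc, sub_self]
  have hgeo : r ^ m - L ^ m
      = (∑ i ∈ Finset.range m, r ^ i * L ^ (m - 1 - i)) * (r - L) :=
    (geom_sum₂_mul r L m).symm
  have hsumK : (∑ i ∈ Finset.range m, r ^ i * L ^ (m - 1 - i))
      ∈ Kdl k (dmin * (m - 1)) := by
    apply Submodule.sum_mem
    intro i hi
    rw [Finset.mem_range] at hi
    have h3 := mul_mem_Kdl (pow_mem_Kdl hrK i)
      (pow_mem_Kdl (isHomogeneous_mem_Kdl hLhom) (m - 1 - i))
    rw [← Nat.left_distrib, show i + (m - 1 - i) = m - 1 from by omega] at h3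
    exact h3
  have hEK : r ^ m - L ^ m ∈ Kdl k (dmin * m + 1) := by
    rw [hgeo]
    have h3 := mul_mem_Kdl hsumK hrLK
    have h4 : dmin * (m - 1) + dmin = dmin * m := by
      rw [← Nat.mul_succ]
      congr 1
      omega
    rw [show dmin * (m - 1) + (dmin + 1) = dmin * m + 1 from by omega] at h3
    exact h3
  have htermK : ∀ j ∈ Finset.Icc 1 m, a j * r ^ (m - j) ∈ Kdl k (dmin * m + 1) := by
    intro j hj
    have hj' := Finset.mem_Icc.mp hj
    have h3 := mul_mem_Kdl (haK j hj) (pow_mem_Kdl hrK (m - j))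
    apply Kdl_antitone _ h3
    have h4 : dmin * (m - j) + dmin * j = dmin * m := by
      rw [← Nat.left_distrib]
      congr 1
      omega
    have h5 : dmin * j ≤ j := le_trans (Nat.mul_le_mul_right j hd1) (by omega)
    omega
  have hLmK : L ^ m ∈ Kdl k (dmin * m + 1) := by
    have hsum' : L ^ m = -(r ^ m - L ^ m)
        - ∑ j ∈ Finset.Icc 1 m, a j * r ^ (m - j) := by
      linear_combination heq
    rw [hsum']
    exact Submodule.sub_mem _ (Submodule.neg_mem _ hEK) (Submodule.sum_mem _ htermK)
  have hLm_hom : (L ^ m).IsHomogeneous (dmin * m) := hLhom.pow m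
  have hLmne : L ^ m ≠ 0 := pow_ne_zero m hLne
  obtain ⟨e, he⟩ := MvPolynomial.ne_zero_iff.mp hLmne
  have hedeg : e.degree = dmin * m := by
    by_contra hcon
    exact he (hLm_hom.coeff_eq_zero hcon)
  exact he (hLmK e (by omega))

end Aux

open MvPolynomial RingTheory.Sequence in
theorem stmt_12 {k : Type*} [Field k] (g h : MvPolynomial (Fin 2) k)
    (hg : g.IsHomogeneous 2) (hh : h.IsHomogeneous 2)
    (hreg : IsRegular (MvPolynomial (Fin 2) k) [g, h]) :
    ∀ r : MvPolynomial (Fin 2) k,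
      r ∈ (Ideal.span {X 0, X 1} : Ideal (MvPolynomial (Fin 2) k)) ^ 2 ↔
        IsIntegralOverIdeal (Ideal.span {g, h}) r := by
  have hw := hreg.toIsWeaklyRegular
  rw [RingTheory.Sequence.isWeaklyRegular_cons_iff,
    RingTheory.Sequence.isWeaklyRegular_singleton_iff] at hw
  obtain ⟨hg1, hg2⟩ := hw
  intro r
  constructor
  · intro hr
    exact exists_integral g h hg hh hg1 hg2 hr
  · intro hint
    exact mem_sq_of_integral g h hg hh hint
end

section
/- Let R'' be a Noetherian local domain, I an ideal, x ∈ I, and suppose: (a) the integral closure of (I/(x))^n in R''/(x) equals (I/(x))^n for all n ≥ 1, and (b) the colon equality (integral closure of I^n) : x = integral closure of I^{n−1} holds for all n ≥ 1. Then I^n is integrally closed for all n ≥ 1 (given I itself is integrally closed). -/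
/-!
Reducing modulo `x`, integral closedness of `(I/(x))^n` writes an `r` integral over `I^n` as
`r = p + x s` with `p ∈ I^n`. Then `x s = r - p` is still integral over `I^n`, so the colon
condition makes `s` integral over `I^(n-1)`; by induction, starting from `I^0 = R`, `s ∈ I^(n-1)`
and hence `r ∈ I^n`.

Translating by `p ∈ J` preserves integrality over `J` because `r` is integral over `J` exactly when
`r t` is integral over the Rees algebra `R[Jt] ⊆ R[t]`, which contains `p t`.
-/

open Polynomial

section

variable {R : Type*} [CommRing R]

lemma Finset.sum_range_eq_sum_Icc_reflect {M : Type*} [AddCommMonoid M] (f : ℕ → M) (m : ℕ) :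
    ∑ i ∈ Finset.range m, f i = ∑ j ∈ Finset.Icc 1 m, f (m - j) := by
  refine Finset.sum_nbij' (fun i => m - i) (fun j => m - j) ?_ ?_ ?_ ?_ fun i hi => ?_
  any_goals intro i hi; simp only [Finset.mem_range, Finset.mem_Icc] at hi ⊢; omega
  rw [Nat.sub_sub_self (Finset.mem_range.mp hi).le]

lemma IsIntegralOverIdeal.of_subsingleton [Subsingleton R] (J : Ideal R) (r : R) :
    IsIntegralOverIdeal J r :=
  ⟨1, one_pos, 0, fun j _ => (J ^ j).zero_mem, Subsingleton.elim _ _⟩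

lemma IsIntegralOverIdeal.map {S : Type*} [CommRing S] (f : R →+* S) {J : Ideal R} {r : R}
    (h : IsIntegralOverIdeal J r) : IsIntegralOverIdeal (J.map f) (f r) := by
  obtain ⟨m, hm, a, ha, hr⟩ := h
  refine ⟨m, hm, fun j => f (a j), fun j hj => ?_, ?_⟩
  · rw [← Ideal.map_pow]
    exact Ideal.mem_map_of_mem f (ha j hj)
  · simpa only [map_add, map_pow, map_sum, map_mul, map_zero] using congrArg f hr

lemma IsIntegralOverIdeal.isIntegral_reesAlgebra {J : Ideal R} {r : R}
    (h : IsIntegralOverIdeal J r) : IsIntegral (reesAlgebra J) (monomial 1 r) := by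
  obtain ⟨m, hm, a, ha, hr⟩ := h
  let b : ℕ → reesAlgebra J := fun j => if hj : j ∈ Finset.Icc 1 m then
    ⟨monomial j (a j), reesAlgebra.monomial_mem.mpr (ha j hj)⟩ else 0
  refine ⟨X ^ m + ∑ j ∈ Finset.Icc 1 m, C (b j) * X ^ (m - j), monic_X_pow_add ?_, ?_⟩
  · refine (degree_sum_le _ _).trans_lt ((Finset.sup_lt_iff (WithBot.bot_lt_coe m)).2 fun j hj => ?_)
    exact (degree_C_mul_X_pow_le _ _).trans_lt
      (WithBot.coe_lt_coe.mpr (Nat.sub_lt hm (Finset.mem_Icc.mp hj).1))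
  · have hpow : ∀ k, monomial 1 r ^ k = monomial k (r ^ k) := fun k => by
      rw [monomial_pow, one_mul]
    have hterm : ∀ j ∈ Finset.Icc 1 m,
        algebraMap _ R[X] (b j) * monomial 1 r ^ (m - j) = monomial m (a j * r ^ (m - j)) := by
      intro j hj
      rw [hpow, Subalgebra.algebraMap_eq]
      change (b j : R[X]) * _ = _
      simp only [b, dif_pos hj]
      rw [monomial_mul_monomial, Nat.add_sub_cancel' (Finset.mem_Icc.mp hj).2]
    simp only [eval₂_add, eval₂_X_pow, eval₂_finsetSum, eval₂_mul, eval₂_C]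
    rw [Finset.sum_congr rfl hterm, hpow, ← map_sum, ← map_add, hr, map_zero]

lemma isIntegralOverIdeal_of_isIntegral_reesAlgebra {J : Ideal R} {r : R}
    (h : IsIntegral (reesAlgebra J) (monomial 1 r)) : IsIntegralOverIdeal J r := by
  obtain ⟨q, hq, hqr⟩ := h
  set m := q.natDegree
  rcases Nat.eq_zero_or_pos m with hm | hm
  · rw [hq.natDegree_eq_zero.mp hm, eval₂_one] at hqr
    have : Subsingleton R :=
      subsingleton_iff_subsingleton.mp (subsingleton_of_zero_eq_one hqr.symm)
    exact .of_subsingleton J r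
  refine ⟨m, hm, fun j => (q.coeff (m - j) : R[X]).coeff j, fun j _ => (q.coeff (m - j)).2 j, ?_⟩
  have hcoeff : ∑ i ∈ Finset.range (m + 1), (q.coeff i : R[X]).coeff (m - i) * r ^ i = 0 := by
    rw [← coeff_zero m, ← hqr, eval₂_eq_sum_range' _ m.lt_succ_self, finsetSum_coeff]
    refine Finset.sum_congr rfl fun i hi => ?_
    conv_rhs => rw [← Nat.sub_add_cancel (Nat.lt_succ_iff.mp (Finset.mem_range.mp hi))]
    rw [monomial_pow, one_mul, Subalgebra.algebraMap_eq, coeff_mul_monomial]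
    rfl
  rw [Finset.sum_range_succ, Nat.sub_self, hq.coeff_natDegree, OneMemClass.coe_one, coeff_one_zero,
    one_mul, Finset.sum_range_eq_sum_Icc_reflect, add_comm] at hcoeff
  rw [← hcoeff]
  congr 1
  refine Finset.sum_congr rfl fun j hj => ?_
  rw [Nat.sub_sub_self (Finset.mem_Icc.mp hj).2]

lemma isIntegralOverIdeal_iff_isIntegral_reesAlgebra {J : Ideal R} {r : R} :
    IsIntegralOverIdeal J r ↔ IsIntegral (reesAlgebra J) (monomial 1 r) :=
  ⟨IsIntegralOverIdeal.isIntegral_reesAlgebra, isIntegralOverIdeal_of_isIntegral_reesAlgebra⟩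

lemma IsIntegralOverIdeal.sub_of_mem {J : Ideal R} {r p : R} (h : IsIntegralOverIdeal J r)
    (hp : p ∈ J) : IsIntegralOverIdeal J (r - p) := by
  rw [isIntegralOverIdeal_iff_isIntegral_reesAlgebra] at h ⊢
  rw [map_sub]
  have hpJ : monomial 1 p ∈ reesAlgebra J := reesAlgebra.monomial_mem.mpr (by rwa [pow_one])
  exact h.sub (isIntegral_algebraMap (x := (⟨_, hpJ⟩ : reesAlgebra J)))

lemma Ideal.IsIntClosed.of_map_mk_span_singleton {J L : Ideal R} {x : R}
    (hquot : (J.map (Ideal.Quotient.mk (Ideal.span {x}))).IsIntClosed)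
    (hcolon : ∀ s, IsIntegralOverIdeal J (x * s) → IsIntegralOverIdeal L s)
    (hL : L.IsIntClosed) (hxL : ∀ s ∈ L, x * s ∈ J) : J.IsIntClosed := by
  intro r hr
  obtain ⟨p, hp, q, hq, rfl⟩ : ∃ p ∈ J, ∃ q ∈ Ideal.span {x}, p + q = r := by
    rw [← Submodule.mem_sup, ← Ideal.mem_quotient_iff_mem_sup]
    exact hquot _ (hr.map _)
  obtain ⟨s, rfl⟩ := Ideal.mem_span_singleton'.mp hq
  have hxs : IsIntegralOverIdeal J (x * s) := by
    simpa only [add_sub_cancel_left, mul_comm s x] using hr.sub_of_mem hp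
  rw [mul_comm s x]
  exact J.add_mem hp (hxL s (hL s (hcolon s hxs)))

end

theorem stmt_13_general {R : Type*} [CommRing R] (I : Ideal R) (x : R) (hx : x ∈ I)
    (ha : ∀ n : ℕ, 1 ≤ n →
      ((I.map (Ideal.Quotient.mk (Ideal.span {x}))) ^ n).IsIntClosed)
    (hb : ∀ n : ℕ, 1 ≤ n → ∀ r : R,
      IsIntegralOverIdeal (I ^ n) (x * r) ↔ IsIntegralOverIdeal (I ^ (n - 1)) r) :
    ∀ n : ℕ, 1 ≤ n → (I ^ n).IsIntClosed := by
  suffices h : ∀ n, (I ^ n).IsIntClosed from fun n _ => h n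
  intro n
  induction n with
  | zero =>
    rw [pow_zero, Ideal.one_eq_top]
    exact fun _ _ => Submodule.mem_top
  | succ k ih =>
    refine .of_map_mk_span_singleton (L := I ^ k) ?_ (fun s => (hb (k + 1) k.succ_pos s).mp) ih
      fun s hs => ?_
    · rw [Ideal.map_pow]
      exact ha (k + 1) k.succ_pos
    · rw [pow_succ']
      exact Ideal.mul_mem_mul hx hs

theorem stmt_13 {R : Type*} [CommRing R] [IsDomain R] [IsLocalRing R]
    [IsNoetherianRing R] (I : Ideal R) (x : R) (hx : x ∈ I)
    (hcl : I.IsIntClosed)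
    (ha : ∀ n : ℕ, 1 ≤ n →
      ((I.map (Ideal.Quotient.mk (Ideal.span {x}))) ^ n).IsIntClosed)
    (hb : ∀ n : ℕ, 1 ≤ n → ∀ r : R,
      IsIntegralOverIdeal (I ^ n) (x * r) ↔ IsIntegralOverIdeal (I ^ (n - 1)) r) :
    ∀ n : ℕ, 1 ≤ n → (I ^ n).IsIntClosed :=
  stmt_13_general I x hx ha hb
end
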